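/- arXiv:1905.07015 — 6 statements merged into one kernel-verified Lean document; each statement's English description precedes it below -/
import Mathlib

section
/- Let S be a countable set and let ξ : S → ℝ be square-summable with |ξ_x| ≤ 1/2 for all x ∈ S. Define f_S(ξ) = Σ_{x∈S} (1 − cos(2πξ_x)). If α > 0 and Σ_{x∈S} ξ_x² ≥ α, then 2π²α(1 − (π²/3)α) ≤ f_S(ξ) ≤ 2π²·Σ_{x∈S} ξ_x². -/
open Real

lemma sin_ge_sub_cube' (x : ℝ) (hx : 0 ≤ x) : x - x ^ 3 / 6 ≤ Real.sin x := by
  have hmono : Monotone (fun t : ℝ => Real.sin t - t + t ^ 3 / 6) := by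
    apply monotone_of_deriv_nonneg
    · fun_prop
    · intro t
      have h : HasDerivAt (fun t : ℝ => Real.sin t - t + t ^ 3 / 6)
          (Real.cos t - 1 + (3 : ℕ) * t ^ 2 / 6) t :=
        ((Real.hasDerivAt_sin t).sub (hasDerivAt_id t)).add ((hasDerivAt_pow 3 t).div_const 6)
      rw [h.deriv]
      have := Real.one_sub_sq_div_two_le_cos (x := t)
      push_cast
      nlinarith
  have := hmono hx
  simp only [Real.sin_zero] at this
  nlinarith [this]

lemma cos_le_quartic (x : ℝ) : Real.cos x ≤ 1 - x ^ 2 / 2 + x ^ 4 / 24 := by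
  have key : ∀ y : ℝ, 0 ≤ y → Real.cos y ≤ 1 - y ^ 2 / 2 + y ^ 4 / 24 := by
    intro y hy
    have hmono : MonotoneOn (fun t : ℝ => 1 - t ^ 2 / 2 + t ^ 4 / 24 - Real.cos t)
        (Set.Ici (0 : ℝ)) := by
      apply monotoneOn_of_deriv_nonneg (convex_Ici 0)
      · fun_prop
      · apply Differentiable.differentiableOn; fun_prop
      · intro t ht
        rw [interior_Ici] at ht
        have h : HasDerivAt (fun t : ℝ => 1 - t ^ 2 / 2 + t ^ 4 / 24 - Real.cos t)
            (((0 : ℝ) - (2 : ℕ) * t ^ 1 / 2 + (4 : ℕ) * t ^ 3 / 24) - (-Real.sin t)) t := by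
          exact (((hasDerivAt_const t (1:ℝ)).sub ((hasDerivAt_pow 2 t).div_const 2)).add
            ((hasDerivAt_pow 4 t).div_const 24)).sub (Real.hasDerivAt_cos t)
        rw [h.deriv]
        have := sin_ge_sub_cube' t (le_of_lt ht)
        push_cast
        nlinarith
    have := hmono (Set.self_mem_Ici) (Set.mem_Ici.2 hy) hy
    simp only [Real.cos_zero] at this
    nlinarith [this]
  rcases le_total 0 x with hx | hx
  · exact key x hx
  · have h := key (-x) (by linarith)
    rw [Real.cos_neg] at h
    nlinarith [h]


/-- For a countable set `S` and square-summable `ξ : S → ℝ` with `|ξ_x| ≤ 1/2`, if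
`α > 0` and `‖ξ‖₂² ≥ α` then `2π²α(1 − (π²/3)α) ≤ Σₓ (1 − cos(2πξ_x)) ≤ 2π²‖ξ‖₂²`. -/
theorem cosine_sum_two_norm_bounds {S : Type*} [Countable S] (ξ : S → ℝ)
    (hsum : Summable (fun x => ξ x ^ 2)) (hbdd : ∀ x, |ξ x| ≤ 1 / 2)
    (α : ℝ) (hα : 0 < α) (hge : α ≤ ∑' x, ξ x ^ 2) :
    2 * π ^ 2 * α * (1 - π ^ 2 / 3 * α) ≤ ∑' x, (1 - Real.cos (2 * π * ξ x)) ∧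
    ∑' x, (1 - Real.cos (2 * π * ξ x)) ≤ 2 * π ^ 2 * ∑' x, ξ x ^ 2 := by
  have hπ := Real.pi_pos
  set A := ∑' x, ξ x ^ 2 with hA_def
  have hA : 0 < A := lt_of_lt_of_le hα hge
  -- upper bound facts
  have hcos_le : ∀ x, 1 - Real.cos (2 * π * ξ x) ≤ 2 * π ^ 2 * ξ x ^ 2 := by
    intro x
    have := Real.one_sub_sq_div_two_le_cos (x := 2 * π * ξ x)
    nlinarith
  have hcos_nonneg : ∀ x, 0 ≤ 1 - Real.cos (2 * π * ξ x) := fun x => by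
    have := Real.cos_le_one (2 * π * ξ x); linarith
  have hsumcos : Summable (fun x => 1 - Real.cos (2 * π * ξ x)) :=
    Summable.of_nonneg_of_le hcos_nonneg hcos_le (hsum.mul_left (2 * π ^ 2))
  have hupper : ∑' x, (1 - Real.cos (2 * π * ξ x)) ≤ 2 * π ^ 2 * A := by
    calc ∑' x, (1 - Real.cos (2 * π * ξ x)) ≤ ∑' x, 2 * π ^ 2 * ξ x ^ 2 :=
          Summable.tsum_le_tsum hcos_le hsumcos (hsum.mul_left _)
      _ = 2 * π ^ 2 * A := tsum_mul_left
  refine ⟨?_, hupper⟩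
  -- lower bound
  set c := Real.sqrt (α / A) with hc_def
  have hc0 : 0 ≤ c := Real.sqrt_nonneg _
  have hc2 : c ^ 2 = α / A := Real.sq_sqrt (by positivity)
  have hc1 : c ≤ 1 := by
    rw [hc_def]
    rw [show (1 : ℝ) = Real.sqrt 1 by simp]
    exact Real.sqrt_le_sqrt (by rw [div_le_one hA]; exact hge)
  -- summability of scaled squares and fourth powers
  have hsum4 : Summable (fun x => ξ x ^ 4) := by
    apply Summable.of_nonneg_of_le (fun x => by positivity) (fun x => ?_)
      (hsum.mul_left (1 / 4))
    have h := hbdd x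
    have h2 : ξ x ^ 2 ≤ 1 / 4 := by nlinarith [abs_nonneg (ξ x), sq_abs (ξ x)]
    nlinarith [sq_nonneg (ξ x)]
  have hsum2c : Summable (fun x => (c * ξ x) ^ 2) := by
    simpa [mul_pow] using hsum.mul_left (c ^ 2)
  have hsum4c : Summable (fun x => (c * ξ x) ^ 4) := by
    simpa [mul_pow] using hsum4.mul_left (c ^ 4)
  -- scaled two-norm equals α
  have hT2 : ∑' x, (c * ξ x) ^ 2 = α := by
    have : (fun x => (c * ξ x) ^ 2) = fun x => c ^ 2 * ξ x ^ 2 := by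
      funext x; ring
    rw [this, tsum_mul_left, ← hA_def, hc2]
    field_simp
  -- fourth-power sum bounded by α²
  have hT4 : ∑' x, (c * ξ x) ^ 4 ≤ α ^ 2 := by
    have hpt : ∀ x, (c * ξ x) ^ 4 ≤ α * (c * ξ x) ^ 2 := by
      intro x
      have hle : (c * ξ x) ^ 2 ≤ α := by
        rw [← hT2]
        exact Summable.le_tsum hsum2c x (fun y _ => by positivity)
      nlinarith [sq_nonneg (c * ξ x)]
    calc ∑' x, (c * ξ x) ^ 4 ≤ ∑' x, α * (c * ξ x) ^ 2 :=
          Summable.tsum_le_tsum hpt hsum4c (hsum2c.mul_left α)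
      _ = α * α := by rw [tsum_mul_left, hT2]
      _ = α ^ 2 := by ring
  -- monotonicity: cos(2πξ) ≤ cos(2πcξ)
  have hmono : ∀ x, 1 - Real.cos (2 * π * (c * ξ x)) ≤ 1 - Real.cos (2 * π * ξ x) := by
    intro x
    have e1 : Real.cos (2 * π * ξ x) = Real.cos (2 * π * |ξ x|) := by
      rw [← Real.cos_abs (2 * π * ξ x), abs_mul, abs_of_pos (by positivity : (0:ℝ) < 2 * π)]
    have e2 : Real.cos (2 * π * (c * ξ x)) = Real.cos (2 * π * (c * |ξ x|)) := by
      rw [← Real.cos_abs (2 * π * (c * ξ x))]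
      rw [show |2 * π * (c * ξ x)| = 2 * π * (c * |ξ x|) by
        rw [abs_mul, abs_mul, abs_mul, abs_of_nonneg hc0,
          abs_of_pos Real.pi_pos, abs_of_pos (by norm_num : (0:ℝ) < 2)]]
    rw [e1, e2]
    have habs := hbdd x
    have h := Real.cos_le_cos_of_nonneg_of_le_pi
      (x := 2 * π * (c * |ξ x|)) (y := 2 * π * |ξ x|)
      (by positivity)
      (by nlinarith [abs_nonneg (ξ x)])
      (by nlinarith [mul_le_of_le_one_left (abs_nonneg (ξ x)) hc1, hπ])
    linarith
  -- quartic lower bound pointwise for scaled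
  have hq : ∀ x, 2 * π ^ 2 * (c * ξ x) ^ 2 - 2 * π ^ 4 / 3 * (c * ξ x) ^ 4
      ≤ 1 - Real.cos (2 * π * (c * ξ x)) := by
    intro x
    have := cos_le_quartic (2 * π * (c * ξ x))
    nlinarith
  have hcos_nonneg' : ∀ x, 0 ≤ 1 - Real.cos (2 * π * (c * ξ x)) := fun x => by
    have := Real.cos_le_one (2 * π * (c * ξ x)); linarith
  have hcos_le' : ∀ x, 1 - Real.cos (2 * π * (c * ξ x)) ≤ 2 * π ^ 2 * (c * ξ x) ^ 2 := by
    intro x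
    have := Real.one_sub_sq_div_two_le_cos (x := 2 * π * (c * ξ x))
    nlinarith
  have hsumcos' : Summable (fun x => 1 - Real.cos (2 * π * (c * ξ x))) :=
    Summable.of_nonneg_of_le hcos_nonneg' hcos_le' (hsum2c.mul_left (2 * π ^ 2))
  have hsumq : Summable (fun x => 2 * π ^ 2 * (c * ξ x) ^ 2 - 2 * π ^ 4 / 3 * (c * ξ x) ^ 4) :=
    (hsum2c.mul_left (2 * π ^ 2)).sub (hsum4c.mul_left (2 * π ^ 4 / 3))
  have hstep1 : ∑' x, (2 * π ^ 2 * (c * ξ x) ^ 2 - 2 * π ^ 4 / 3 * (c * ξ x) ^ 4)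
      ≤ ∑' x, (1 - Real.cos (2 * π * (c * ξ x))) := Summable.tsum_le_tsum hq hsumq hsumcos'
  have hstep2 : ∑' x, (1 - Real.cos (2 * π * (c * ξ x)))
      ≤ ∑' x, (1 - Real.cos (2 * π * ξ x)) := Summable.tsum_le_tsum hmono hsumcos' hsumcos
  have hval : ∑' x, (2 * π ^ 2 * (c * ξ x) ^ 2 - 2 * π ^ 4 / 3 * (c * ξ x) ^ 4)
      = 2 * π ^ 2 * α - 2 * π ^ 4 / 3 * ∑' x, (c * ξ x) ^ 4 := by
    rw [Summable.tsum_sub (hsum2c.mul_left _) (hsum4c.mul_left _), tsum_mul_left, tsum_mul_left, hT2]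
  have : 2 * π ^ 2 * α * (1 - π ^ 2 / 3 * α)
      ≤ ∑' x, (2 * π ^ 2 * (c * ξ x) ^ 2 - 2 * π ^ 4 / 3 * (c * ξ x) ^ 4) := by
    rw [hval]
    nlinarith [mul_le_mul_of_nonneg_left hT4 (by positivity : (0:ℝ) ≤ 2 * π ^ 4 / 3)]
  linarith
end

section
/- Let 𝒯 be a countable set, R ⊆ 𝒯, and let ξ : 𝒯 → ℝ be square-summable with ξ_x ∈ (−1/2, 1/2] for all x. Write ‖ξ‖²_{2,Rᶜ} = Σ_{x ∈ 𝒯∖R} ξ_x² and f(ξ) = Σ_{x∈𝒯} (1 − cos(2πξ_x)). Then there is a real number ϑ with |ϑ| ≤ 1 such that f(ξ) = Σ_{x∈R} (1 − cos(2πξ_x)) + 2π²‖ξ‖²_{2,Rᶜ} − (π⁴/3)‖ξ‖⁴_{2,Rᶜ} + ϑ·(π⁴/3)‖ξ‖⁴_{2,Rᶜ}, where ‖ξ‖⁴_{2,Rᶜ} = (‖ξ‖²_{2,Rᶜ})². -/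
open Real

/-!
Taylor's theorem for the cosine gives, for every real `y`,
`2π²y² - (2π⁴/3)y⁴ ≤ 1 - cos (2πy) ≤ 2π²y²`. Summing over `Rᶜ` and using `Σ y⁴ ≤ (Σ y²)²`
traps the `Rᶜ` part of `f(ξ)` between `2π²S - (2π⁴/3)S²` and `2π²S`, where `S = ‖ξ‖²_{2,Rᶜ}`;
the midpoint of that interval is `2π²S - (π⁴/3)S²` and its half-width is `(π⁴/3)S²`.
-/

/-- `1 - cos x = 2 sin² (x/2)` and `sin u ≥ u - u³/6 ≥ 0` for `0 ≤ u ≤ √6`; for larger `|x|` the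
right-hand side exceeds `1`. -/
lemma cos_le_one_sub_sq_div_two_add_pow_four_div (x : ℝ) :
    cos x ≤ 1 - x ^ 2 / 2 + x ^ 4 / 24 := by
  wlog hx : 0 ≤ x generalizing x
  · simpa [show (-x) ^ 4 = x ^ 4 by ring] using this (-x) (by linarith)
  rcases le_or_gt (x ^ 2) 24 with hsmall | hlarge
  · obtain ⟨u, rfl⟩ : ∃ u, x = 2 * u := ⟨x / 2, by ring⟩
    have hu : 0 ≤ u - u ^ 3 / 6 := by
      have : u - u ^ 3 / 6 = u * (1 - u ^ 2 / 6) := by ring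
      rw [this]; exact mul_nonneg (by linarith) (by nlinarith)
    have hsin : (u - u ^ 3 / 6) ^ 2 ≤ sin u ^ 2 :=
      pow_le_pow_left₀ hu (sin_ge_sub_cube (by linarith)) 2
    have hcos : cos (2 * u) = 1 - 2 * sin u ^ 2 := by rw [sin_sq_eq_half_sub]; ring
    nlinarith [pow_nonneg (sq_nonneg u) 3]
  · nlinarith [cos_le_one x]

lemma exists_abs_le_one_mul_eq_of_abs_le {E M : ℝ} (h : |E| ≤ M) :
    ∃ ϑ : ℝ, |ϑ| ≤ 1 ∧ E = ϑ * M := by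
  rcases (abs_nonneg E |>.trans h).eq_or_lt with hM | hM
  · exact ⟨0, by simp, by simpa [← hM] using h⟩
  · refine ⟨E / M, ?_, by field_simp⟩
    rwa [abs_div, abs_of_pos hM, div_le_one hM]

section NonnegSummable

variable {ι : Type*} {a g : ι → ℝ} {c d : ℝ}

lemma Summable.sq_le_mul_tsum (ha : Summable a) (ha0 : ∀ i, 0 ≤ a i) (i : ι) :
    a i ^ 2 ≤ a i * ∑' j, a j := by
  rw [sq]
  exact mul_le_mul_of_nonneg_left (ha.le_tsum i fun j _ => ha0 j) (ha0 i)

lemma Summable.sq_of_nonneg (ha : Summable a) (ha0 : ∀ i, 0 ≤ a i) :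
    Summable (fun i => a i ^ 2) :=
  .of_nonneg_of_le (fun _ => sq_nonneg _) (ha.sq_le_mul_tsum ha0) (ha.mul_right _)

lemma Summable.tsum_sq_le_sq_tsum (ha : Summable a) (ha0 : ∀ i, 0 ≤ a i) :
    ∑' i, a i ^ 2 ≤ (∑' i, a i) ^ 2 :=
  calc ∑' i, a i ^ 2 ≤ ∑' i, a i * ∑' j, a j :=
        (ha.sq_of_nonneg ha0).tsum_le_tsum (ha.sq_le_mul_tsum ha0) (ha.mul_right _)
    _ = (∑' i, a i) ^ 2 := by rw [tsum_mul_right, sq]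

lemma Summable.of_sub_mul_sq_le_of_le_mul (ha : Summable a) (ha0 : ∀ i, 0 ≤ a i)
    (hlow : ∀ i, c * a i - d * a i ^ 2 ≤ g i) (hup : ∀ i, g i ≤ c * a i) : Summable g := by
  have hsq := ha.sq_of_nonneg ha0
  have hgap : Summable (fun i => g i - (c * a i - d * a i ^ 2)) :=
    .of_nonneg_of_le (fun i => sub_nonneg.2 (hlow i)) (fun i => by linarith [hup i])
      (hsq.mul_left d)
  simpa using hgap.add ((ha.mul_left c).sub (hsq.mul_left d))

lemma abs_tsum_sub_le_of_sub_mul_sq_le_of_le_mul (ha : Summable a) (ha0 : ∀ i, 0 ≤ a i)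
    (hd : 0 ≤ d) (hlow : ∀ i, c * a i - d * a i ^ 2 ≤ g i) (hup : ∀ i, g i ≤ c * a i) :
    |∑' i, g i - (c * ∑' i, a i - d / 2 * (∑' i, a i) ^ 2)| ≤ d / 2 * (∑' i, a i) ^ 2 := by
  have hg := ha.of_sub_mul_sq_le_of_le_mul ha0 hlow hup
  have hsq := ha.sq_of_nonneg ha0
  have hg_le : ∑' i, g i ≤ c * ∑' i, a i := by
    rw [← tsum_mul_left]
    exact hg.tsum_le_tsum hup (ha.mul_left c)
  have le_hg : c * ∑' i, a i - d * ∑' i, a i ^ 2 ≤ ∑' i, g i := by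
    rw [← tsum_mul_left, ← tsum_mul_left, ← (ha.mul_left c).tsum_sub (hsq.mul_left d)]
    exact ((ha.mul_left c).sub (hsq.mul_left d)).tsum_le_tsum hlow hg
  have hquartic : d * ∑' i, a i ^ 2 ≤ d * (∑' i, a i) ^ 2 :=
    mul_le_mul_of_nonneg_left (ha.tsum_sq_le_sq_tsum ha0) hd
  rw [abs_le]
  constructor <;> linarith

end NonnegSummable

theorem cosine_sum_tail_approx_general {T : Type*} (R : Set T) (ξ : T → ℝ)
    (hsum : Summable (fun x => ξ x ^ 2)) :
    ∃ ϑ : ℝ, |ϑ| ≤ 1 ∧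
      ∑' x : T, (1 - Real.cos (2 * π * ξ x)) =
        (∑' x : R, (1 - Real.cos (2 * π * ξ (x : T)))) +
          2 * π ^ 2 * (∑' x : ↥(Rᶜ), ξ (x : T) ^ 2) -
          π ^ 4 / 3 * (∑' x : ↥(Rᶜ), ξ (x : T) ^ 2) ^ 2 +
          ϑ * (π ^ 4 / 3) * (∑' x : ↥(Rᶜ), ξ (x : T) ^ 2) ^ 2 := by
  have hup : ∀ x, 1 - cos (2 * π * ξ x) ≤ 2 * π ^ 2 * ξ x ^ 2 := fun x => by
    linarith [one_sub_sq_div_two_le_cos (x := 2 * π * ξ x)]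
  have hlow : ∀ x, 2 * π ^ 2 * ξ x ^ 2 - 2 * π ^ 4 / 3 * (ξ x ^ 2) ^ 2 ≤ 1 - cos (2 * π * ξ x) :=
    fun x => by linarith [cos_le_one_sub_sq_div_two_add_pow_four_div (2 * π * ξ x)]
  obtain ⟨ϑ, hϑ, hE⟩ := exists_abs_le_one_mul_eq_of_abs_le <|
    abs_tsum_sub_le_of_sub_mul_sq_le_of_le_mul (a := fun x : ↥(Rᶜ) => ξ x ^ 2)
      (hsum.subtype Rᶜ) (fun _ => sq_nonneg _) (by positivity) (fun x => hlow x) (fun x => hup x)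
  refine ⟨ϑ, hϑ, ?_⟩
  rw [← (hsum.of_sub_mul_sq_le_of_le_mul (fun _ => sq_nonneg _) hlow hup
    ).tsum_subtype_add_tsum_subtype_compl R]
  linear_combination hE

/-- For a countable set `𝒯`, `R ⊆ 𝒯`, and square-summable `ξ : 𝒯 → (−1/2, 1/2]`, there is
`ϑ` with `|ϑ| ≤ 1` such that
`f(ξ) = Σ_{x∈R} (1 − cos(2πξ_x)) + 2π²‖ξ‖²_{2,Rᶜ} − (π⁴/3)‖ξ‖⁴_{2,Rᶜ} + ϑ(π⁴/3)‖ξ‖⁴_{2,Rᶜ}`. -/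
theorem cosine_sum_tail_approx {T : Type*} [Countable T] (R : Set T) (ξ : T → ℝ)
    (hsum : Summable (fun x => ξ x ^ 2))
    (hbdd : ∀ x, ξ x ∈ Set.Ioc (-(1 / 2) : ℝ) (1 / 2)) :
    ∃ ϑ : ℝ, |ϑ| ≤ 1 ∧
      ∑' x : T, (1 - Real.cos (2 * π * ξ x)) =
        (∑' x : R, (1 - Real.cos (2 * π * ξ (x : T)))) +
          2 * π ^ 2 * (∑' x : ↥(Rᶜ), ξ (x : T) ^ 2) -
          π ^ 4 / 3 * (∑' x : ↥(Rᶜ), ξ (x : T) ^ 2) ^ 2 +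
          ϑ * (π ^ 4 / 3) * (∑' x : ↥(Rᶜ), ξ (x : T) ^ 2) ^ 2 :=
  cosine_sum_tail_approx_general R ξ hsum
end

section
/- The minimum of Σ_{i=0}^{6} (1 − cos(2πx_i)) over all (x₀, x₁, …, x₆) ∈ ℝ⁷ satisfying 6x₀ + Σ_{i=1}^{6} x_i ≥ 3 and |x_i| ≤ 1/2 for all 0 ≤ i ≤ 6 equals 2. (This is the value of the relaxed program P({0}, |ν|) on the 6-regular triangular lattice when |ν₀| = 3; in particular a prevector with a node of height 3 cannot achieve the triangular-lattice spectral parameter γ_tri ≈ 1.694166 < 2.) -/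
open Real

private lemma jordan_bound {t : ℝ} (ht : |t| ≤ 1 / 2) :
    8 * t ^ 2 ≤ 1 - Real.cos (2 * π * t) := by
  -- reduce to nonneg t using evenness
  have key : ∀ u : ℝ, 0 ≤ u → u ≤ 1 / 2 → 8 * u ^ 2 ≤ 1 - Real.cos (2 * π * u) := by
    intro u hu hu2
    have hπ := Real.pi_pos
    have h1 : 2 / π * (π * u) ≤ Real.sin (π * u) :=
      Real.mul_le_sin (by positivity) (by nlinarith)
    have h2 : 2 / π * (π * u) = 2 * u := by field_simp
    have h3 : Real.cos (2 * π * u) = 1 - 2 * Real.sin (π * u) ^ 2 := by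
      rw [show 2 * π * u = 2 * (π * u) by ring, Real.cos_two_mul', Real.sin_sq]
      ring
    have h4 : 2 * u ≤ Real.sin (π * u) := h2 ▸ h1
    nlinarith [sq_nonneg (Real.sin (π * u) - 2 * u)]
  rcases le_or_gt 0 t with h | h
  · exact key t h (by rwa [abs_of_nonneg h] at ht)
  · have := key (-t) (by linarith) (by rwa [abs_of_neg h] at ht)
    simpa [mul_neg, Real.cos_neg] using this

/-- The minimum of `Σ_{i=0}^{6} (1 − cos(2πx_i))` subject to `6x₀ + Σ_{i=1}^{6} x_i ≥ 3`
and `|x_i| ≤ 1/2` equals `2`.  This is the value of the relaxed program `P({0}, |ν|)` on the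
6-regular triangular lattice when `|ν₀| = 3`. -/
theorem triangular_height_three_program :
    IsLeast {s : ℝ | ∃ x : Fin 7 → ℝ,
        3 ≤ 6 * x 0 + (∑ i : Fin 6, x i.succ) ∧
        (∀ i, |x i| ≤ 1 / 2) ∧
        s = ∑ i : Fin 7, (1 - Real.cos (2 * π * x i))}
      2 := by
  constructor
  · -- membership : x₀ = 1/2, others 0
    refine ⟨fun i => if i = 0 then 1 / 2 else 0, ?_, ?_, ?_⟩
    · norm_num [Fin.sum_univ_six, Fin.succ_ne_zero]
    · intro i
      by_cases h : i = 0 <;> simp [h] <;> norm_num [abs_of_nonneg]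
    · have h0 : Real.cos (2 * π * (1 / 2 : ℝ)) = -1 := by
        rw [show 2 * π * (1 / 2 : ℝ) = π by ring, Real.cos_pi]
      norm_num [Fin.sum_univ_seven, h0, show ((1:Fin 7) ≠ 0) by decide,
        show ((2:Fin 7) ≠ 0) by decide, show ((3:Fin 7) ≠ 0) by decide,
        show ((4:Fin 7) ≠ 0) by decide, show ((5:Fin 7) ≠ 0) by decide,
        show ((6:Fin 7) ≠ 0) by decide]
  · rintro s ⟨x, hcon, habs, rfl⟩
    set δ : ℝ := 1 / 2 - x 0 with hδ
    have hδ0 : 0 ≤ δ := by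
      have := habs 0
      rw [abs_le] at this
      simp [hδ]; linarith [this.2]
    set S : ℝ := ∑ i : Fin 6, x i.succ with hS
    have hSδ : 6 * δ ≤ S := by simp only [hδ]; linarith
    -- Cauchy-Schwarz
    have hCS : S ^ 2 ≤ 6 * ∑ i : Fin 6, (x i.succ) ^ 2 := by
      have := sq_sum_le_card_mul_sum_sq (s := (Finset.univ : Finset (Fin 6)))
        (f := fun i => x i.succ)
      simpa using this
    -- each neighbor term
    have hnb : ∀ i : Fin 6, 8 * (x i.succ) ^ 2 ≤ 1 - Real.cos (2 * π * x i.succ) :=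
      fun i => jordan_bound (habs i.succ)
    have hsum_nb : 8 * ∑ i : Fin 6, (x i.succ) ^ 2
        ≤ ∑ i : Fin 6, (1 - Real.cos (2 * π * x i.succ)) := by
      rw [Finset.mul_sum]
      exact Finset.sum_le_sum fun i _ => hnb i
    -- the center term
    have hc : Real.cos (2 * π * x 0) = -Real.cos (2 * π * δ) := by
      rw [show 2 * π * x 0 = π - 2 * π * δ by simp [hδ]; ring, Real.cos_pi_sub]
    have hcd : 1 - (2 * π * δ) ^ 2 / 2 ≤ Real.cos (2 * π * δ) :=
      Real.one_sub_sq_div_two_le_cos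
    -- split the sum over Fin 7
    have hsplit : ∑ i : Fin 7, (1 - Real.cos (2 * π * x i))
        = (1 - Real.cos (2 * π * x 0)) + ∑ i : Fin 6, (1 - Real.cos (2 * π * x i.succ)) :=
      Fin.sum_univ_succ _
    rw [hsplit, hc]
    have hπ : π ≤ 3.15 := (Real.pi_lt_d2).le
    have hkey : 0 ≤ (3.15 - π) * (3.15 + π) * δ ^ 2 :=
      mul_nonneg (mul_nonneg (by linarith) (by positivity)) (sq_nonneg δ)
    have hπ0 : 0 < π := Real.pi_pos
    have hSsq : (6 * δ) ^ 2 ≤ S ^ 2 := by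
      apply sq_le_sq' <;> nlinarith
    have e1 : (2 * π * δ) ^ 2 / 2 = 2 * (π ^ 2 * δ ^ 2) := by ring
    have e2 : (6 * δ) ^ 2 = 36 * δ ^ 2 := by ring
    have e3 : (3.15 - π) * (3.15 + π) * δ ^ 2 = 9.9225 * δ ^ 2 - π ^ 2 * δ ^ 2 := by ring
    rw [e1] at hcd
    rw [e2] at hSsq
    rw [e3] at hkey
    have hd : 0 ≤ δ ^ 2 := sq_nonneg δ
    generalize hgen : π ^ 2 * δ ^ 2 = p at hcd hkey
    generalize hc2 : Real.cos (2 * π * δ) = c at hcd ⊢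
    generalize hT : ∑ i : Fin 6, (1 - Real.cos (2 * π * x i.succ)) = T at hsum_nb ⊢
    generalize hQ : ∑ i : Fin 6, x i.succ ^ 2 = Q at hCS hsum_nb
    clear_value δ S
    generalize hD : δ ^ 2 = D at hd hkey hSsq
    generalize hS2 : S ^ 2 = S2 at hCS hSsq
    linarith
end

section
/- The minimum of (1 − cos(2πx₀)) + Σ_{i=1}^{3} (1 − cos(2πx_i)) over all (x₀, x₁, x₂, x₃) ∈ ℝ⁴ satisfying 3x₀ + x₁ + x₂ + x₃ ≥ 2 and |x_i| ≤ 1/2 for all 0 ≤ i ≤ 3 equals 7/2. (This is the value of the relaxed program P({0}, |ν|) on the 3-regular honeycomb tiling when |ν₀| = 2.) -/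
open Real

/-!
The minimum is attained at `(1/2, 1/6, 1/6, 1/6)`. Since `cost x = 1 - cos (2πx)` is even, we may
assume every `x i ∈ [0, 1/2]`. If `x₁, x₂, x₃ ≤ 3/8`, the tangent line of `cost` at `1/6` (slope
`π√3`) bounds the last three terms and the line `2 + 3π√3 (x - 1/2)` bounds the first, so the sum
is at least `7/2 + π√3 (3x₀ + x₁ + x₂ + x₃ - 2) ≥ 7/2`: this is the Lagrange certificate. The
tangent bound fails near `1/2`, so if some `xᵢ > 3/8` (`i ≥ 1`) we use instead the chord
`4x ≤ cost x` on `[1/4, 1/2]` for the large variables and Jordan's inequality `8x² ≤ cost x` or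
the tangent line for the others; these cases are not tight.
-/

namespace HoneycombHeightTwo

noncomputable def cost (x : ℝ) : ℝ := 1 - cos (2 * π * x)

lemma cost_eq_two_mul_sin_sq (x : ℝ) : cost x = 2 * sin (π * x) ^ 2 := by
  rw [cost, mul_assoc, cos_two_mul_eq_one_sub]
  ring

lemma cost_nonneg (x : ℝ) : 0 ≤ cost x := by
  rw [cost_eq_two_mul_sin_sq]
  positivity

lemma cost_abs (x : ℝ) : cost |x| = cost x := by
  rw [cost, cost, ← cos_abs (2 * π * x), abs_mul, abs_of_pos two_pi_pos]

lemma eight_mul_sq_le_cost {x : ℝ} (h0 : 0 ≤ x) (h1 : x ≤ 1 / 2) : 8 * x ^ 2 ≤ cost x := by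
  have hsin : 2 / π * (π * x) ≤ sin (π * x) :=
    mul_le_sin (by positivity) (by nlinarith [pi_pos])
  rw [← mul_assoc, div_mul_cancel₀ 2 pi_ne_zero] at hsin
  rw [cost_eq_two_mul_sin_sq]
  nlinarith

/-- Concavity of `cost` on `[1/4, 1/2]`: it lies above its chord. -/
lemma four_mul_le_cost {x : ℝ} (h0 : 1 / 4 ≤ x) (h1 : x ≤ 1 / 2) : 4 * x ≤ cost x := by
  have hcos : 1 - 2 / π * (π - 2 * π * x) ≤ cos (π - 2 * π * x) :=
    one_sub_mul_le_cos (by nlinarith [pi_pos]) (by nlinarith [pi_pos])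
  have hline : 2 / π * (π - 2 * π * x) = 2 - 4 * x := by
    field_simp
    ring
  rw [hline, cos_pi_sub] at hcos
  rw [cost]
  linarith

lemma sqrt_three_mul_sub_sin_le_one_sub_cos {t : ℝ} (ht : t ≤ 4 / 3) :
    √3 * (t - sin t) ≤ 1 - cos t := by
  rcases le_or_gt t 0 with ht0 | ht0
  · nlinarith [le_sin ht0, cos_le_one t, sqrt_nonneg 3]
  have hcube : t - sin t ≤ t ^ 3 / 6 := by linarith [sin_ge_sub_cube ht0.le]
  have hhalf : (t / 2 - (t / 2) ^ 3 / 6) ^ 2 ≤ sin (t / 2) ^ 2 :=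
    pow_le_pow_left₀ (by nlinarith [mul_pos ht0 ht0]) (sin_ge_sub_cube (by positivity)) 2
  have hdouble : 1 - cos t = 2 * sin (t / 2) ^ 2 := by
    have h := cos_two_mul_eq_one_sub (t / 2)
    rw [mul_div_cancel₀ t two_ne_zero] at h
    linarith
  have hsqrt : √3 ≤ 7 / 4 := by
    rw [sqrt_le_left (by norm_num)]
    norm_num
  have hpoly : √3 * t / 3 ≤ (1 - t ^ 2 / 24) ^ 2 := by nlinarith [sqrt_nonneg 3]
  calc √3 * (t - sin t) ≤ √3 * (t ^ 3 / 6) := by gcongr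
    _ = t ^ 2 / 2 * (√3 * t / 3) := by ring
    _ ≤ t ^ 2 / 2 * (1 - t ^ 2 / 24) ^ 2 := by gcongr
    _ = 2 * (t / 2 - (t / 2) ^ 3 / 6) ^ 2 := by ring
    _ ≤ 1 - cos t := by rw [hdouble]; linarith

lemma three_le_pi_mul_sqrt_three : 3 ≤ π * √3 := by
  nlinarith [pi_gt_three, one_le_sqrt.mpr (by norm_num : (1 : ℝ) ≤ 3)]

/-- The tangent line of `cost` at `1/6`, where its slope is `2π sin (π/3) = π√3`. -/
lemma tangent_le_cost {x : ℝ} (hx : x ≤ 3 / 8) : 1 / 2 + π * √3 * (x - 1 / 6) ≤ cost x := by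
  set t := 2 * π * x - π / 3 with ht
  have hbound := sqrt_three_mul_sub_sin_le_one_sub_cos (t := t) (by nlinarith [pi_lt_d2, pi_pos])
  have hcos : cos (2 * π * x) = cos t / 2 - √3 / 2 * sin t := by
    rw [show 2 * π * x = t + π / 3 by ring, cos_add, cos_pi_div_three, sin_pi_div_three]
    ring
  have hline : π * √3 * (x - 1 / 6) = √3 / 2 * t := by rw [ht]; ring
  rw [cost, hcos, hline]
  linarith

lemma head_le_cost {x : ℝ} (hx : x ≤ 1 / 2) : 2 + 3 * (π * √3) * (x - 1 / 2) ≤ cost x := by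
  have hK := three_le_pi_mul_sqrt_three
  rcases le_or_gt (1 / 4) x with hx₀ | hx₀
  · nlinarith [four_mul_le_cost hx₀ hx]
  · nlinarith [cost_nonneg x]

section Cases

variable {a b c d : ℝ}

lemma le_sum_cost_of_small_tail (ha : a ≤ 1 / 2) (hb : b ≤ 3 / 8) (hc : c ≤ 3 / 8) (hd : d ≤ 3 / 8)
    (h : 2 ≤ 3 * a + b + c + d) : 7 / 2 ≤ cost a + cost b + cost c + cost d := by
  have hslack := mul_le_mul_of_nonneg_left (sub_nonneg.mpr h) (by positivity : 0 ≤ π * √3)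
  linarith [head_le_cost ha, tangent_le_cost hb, tangent_le_cost hc, tangent_le_cost hd]

lemma le_sum_cost_of_one_large (ha : a ≤ 3 / 8) (hb : b ≤ 3 / 8) (hc : c ≤ 3 / 8)
    (hd : 3 / 8 ≤ d) (hd' : d ≤ 1 / 2) (h : 2 ≤ 3 * a + b + c + d) :
    7 / 2 ≤ cost a + cost b + cost c + cost d := by
  have hK := three_le_pi_mul_sqrt_three
  linarith [tangent_le_cost ha, tangent_le_cost hb, tangent_le_cost hc,
    four_mul_le_cost (by linarith) hd', mul_nonneg (by positivity : 0 ≤ π * √3)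
      (by linarith : 0 ≤ a + b + c + d - 5 / 4),
    mul_nonneg (by positivity : 0 ≤ π * √3) (by linarith : 0 ≤ 1 / 2 - d)]

lemma le_sum_cost_of_large_head (ha : 3 / 8 ≤ a) (ha' : a ≤ 1 / 2) (hb : 0 ≤ b) (hb' : b ≤ 1 / 2)
    (hc : 0 ≤ c) (hc' : c ≤ 1 / 2) (hd : 3 / 8 ≤ d) (hd' : d ≤ 1 / 2)
    (h : 2 ≤ 3 * a + b + c + d) : 7 / 2 ≤ cost a + cost b + cost c + cost d := by
  linarith [four_mul_le_cost (by linarith) ha', eight_mul_sq_le_cost hb hb',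
    eight_mul_sq_le_cost hc hc', four_mul_le_cost (by linarith) hd',
    sq_nonneg (b - c), sq_nonneg (b + c - 1 / 6)]

lemma le_sum_cost_of_two_large (ha : 0 ≤ a) (ha' : a ≤ 1 / 2) (hb : 0 ≤ b) (hb' : b ≤ 1 / 2)
    (hc : 3 / 8 ≤ c) (hc' : c ≤ 1 / 2) (hd : 3 / 8 ≤ d) (hd' : d ≤ 1 / 2)
    (h : 2 ≤ 3 * a + b + c + d) : 7 / 2 ≤ cost a + cost b + cost c + cost d := by
  linarith [eight_mul_sq_le_cost ha ha', eight_mul_sq_le_cost hb hb',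
    four_mul_le_cost (by linarith) hc', four_mul_le_cost (by linarith) hd',
    sq_nonneg (a - 3 * b), sq_nonneg (3 * a + b - 5 / 4)]

lemma le_sum_cost_of_large_last (ha : 0 ≤ a) (ha' : a ≤ 1 / 2) (hb : 0 ≤ b) (hb' : b ≤ 1 / 2)
    (hc : 0 ≤ c) (hc' : c ≤ 1 / 2) (hd : 3 / 8 ≤ d) (hd' : d ≤ 1 / 2)
    (h : 2 ≤ 3 * a + b + c + d) : 7 / 2 ≤ cost a + cost b + cost c + cost d := by
  rcases le_or_gt a (3 / 8) with ha₁ | ha₁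
  · rcases le_or_gt b (3 / 8) with hb₁ | hb₁
    · rcases le_or_gt c (3 / 8) with hc₁ | hc₁
      · exact le_sum_cost_of_one_large ha₁ hb₁ hc₁ hd hd' h
      · exact le_sum_cost_of_two_large ha ha' hb hb' hc₁.le hc' hd hd' h
    · have := le_sum_cost_of_two_large ha ha' hc hc' hb₁.le hb' hd hd' (by linarith)
      linarith
  · exact le_sum_cost_of_large_head ha₁.le ha' hb hb' hc hc' hd hd' h

lemma le_sum_cost (ha : 0 ≤ a) (ha' : a ≤ 1 / 2) (hb : 0 ≤ b) (hb' : b ≤ 1 / 2)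
    (hc : 0 ≤ c) (hc' : c ≤ 1 / 2) (hd : 0 ≤ d) (hd' : d ≤ 1 / 2)
    (h : 2 ≤ 3 * a + b + c + d) : 7 / 2 ≤ cost a + cost b + cost c + cost d := by
  rcases le_or_gt b (3 / 8) with hb₁ | hb₁
  · rcases le_or_gt c (3 / 8) with hc₁ | hc₁
    · rcases le_or_gt d (3 / 8) with hd₁ | hd₁
      · exact le_sum_cost_of_small_tail ha' hb₁ hc₁ hd₁ h
      · exact le_sum_cost_of_large_last ha ha' hb hb' hc hc' hd₁.le hd' h
    · have := le_sum_cost_of_large_last ha ha' hb hb' hd hd' hc₁.le hc' (by linarith)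
      linarith
  · have := le_sum_cost_of_large_last ha ha' hc hc' hd hd' hb₁.le hb' (by linarith)
    linarith

end Cases

end HoneycombHeightTwo

open HoneycombHeightTwo in
/-- The minimum of `Σ_{i=0}^{3} (1 − cos(2πx_i))` subject to `3x₀ + x₁ + x₂ + x₃ ≥ 2`
and `|x_i| ≤ 1/2` equals `7/2`.  This is the value of the relaxed program `P({0}, |ν|)` on
the 3-regular honeycomb tiling when `|ν₀| = 2`. -/
theorem honeycomb_height_two_program :
    IsLeast {s : ℝ | ∃ x : Fin 4 → ℝ,
        2 ≤ 3 * x 0 + (∑ i : Fin 3, x i.succ) ∧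
        (∀ i, |x i| ≤ 1 / 2) ∧
        s = ∑ i : Fin 4, (1 - Real.cos (2 * π * x i))}
      (7 / 2) := by
  change IsLeast {s : ℝ | ∃ x : Fin 4 → ℝ, 2 ≤ 3 * x 0 + (∑ i : Fin 3, x i.succ) ∧
    (∀ i, |x i| ≤ 1 / 2) ∧ s = ∑ i : Fin 4, cost (x i)} (7 / 2)
  simp only [Fin.sum_univ_four, Fin.sum_univ_three, Fin.succ_zero_eq_one, Fin.succ_one_eq_two,
    show (2 : Fin 3).succ = 3 from rfl]
  constructor
  · have h₀ : cost (1 / 2) = 2 := by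
      rw [cost, show 2 * π * (1 / 2) = π by ring, cos_pi]; norm_num
    have h₁ : cost (1 / 6) = 1 / 2 := by
      rw [cost, show 2 * π * (1 / 6) = π / 3 by ring, cos_pi_div_three]; norm_num
    refine ⟨![1 / 2, 1 / 6, 1 / 6, 1 / 6], ?_, fun i => ?_, ?_⟩
    · simp only [Matrix.cons_val]
      norm_num
    · fin_cases i <;> norm_num [abs_of_nonneg]
    · simp only [Matrix.cons_val, h₀, h₁]
      norm_num
  · rintro s ⟨x, h, hbox, rfl⟩
    simp only [← cost_abs (x _)]
    exact le_sum_cost (abs_nonneg _) (hbox 0) (abs_nonneg _) (hbox 1) (abs_nonneg _) (hbox 2)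
      (abs_nonneg _) (hbox 3)
      (by linarith [le_abs_self (x 0), le_abs_self (x 1), le_abs_self (x 2), le_abs_self (x 3)])
end

section
/- Let ξ : ℤ⁴ → ℝ be square-summable with |ξ_x| ≤ 1/2 for all x, where ℤ⁴ carries the D4 graph structure and Δ is its graph Laplacian. If Δξ is integer-valued and nonzero at at least three distinct vertices (i.e., |supp Δξ| ≥ 3), then Σ_{x∈ℤ⁴} ξ_x² ≥ 3/742 > 0.004043. -/
/-- The twelve neighbors of `0` in the D4 lattice, up to sign (coordinates with respect to
the basis `v₁ = 1`, `v₂ = i`, `v₃ = j`, `v₄ = (1+i+j+k)/2`). -/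
def d4Units : List (Fin 4 → ℤ) :=
  [![1, 0, 0, 0], ![0, 1, 0, 0], ![0, 0, 1, 0], ![0, 0, 0, 1],
   ![-1, -1, -1, 2], ![-1, 0, 0, 1], ![0, -1, 0, 1], ![0, 0, -1, 1],
   ![-1, -1, 0, 1], ![-1, 0, -1, 1], ![0, -1, -1, 1], ![-1, -1, -1, 1]]

/-- The graph Laplacian of the D4 lattice graph on `ℤ⁴`:
`Δf(v) = 24 f(v) − Σ_{u ∈ ±d4Units} f(v + u)`. -/
noncomputable def d4Lap (f : (Fin 4 → ℤ) → ℝ) (v : Fin 4 → ℤ) : ℝ :=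
  24 * f v - (d4Units.map (fun u => f (v + u) + f (v - u))).sum

/-- All 24 signed units. -/
def sUnits : List (Fin 4 → ℤ) := d4Units ++ d4Units.map (fun u => -u)

lemma sUnits_nodup : sUnits.Nodup := by decide

lemma sUnits_ne_zero : (0 : Fin 4 → ℤ) ∉ sUnits := by decide

lemma sUnits_length : sUnits.length = 24 := by decide

lemma list_sum_map_add {α : Type*} (l : List α) (f g : α → ℝ) :
    (l.map fun u => f u + g u).sum = (l.map f).sum + (l.map g).sum := by
  induction l with
  | nil => simp
  | cons a l ih => simp [ih]; ring

lemma sum_map_const {α : Type*} (l : List α) (c : ℝ) :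
    (l.map fun _ => c).sum = l.length * c := by
  induction l with
  | nil => simp
  | cons a l ih => simp [ih]; ring

lemma sum_map_ite {α : Type*} [DecidableEq α] (l : List α) (hl : l.Nodup) (a : α) (c : ℝ) :
    (l.map fun s => if s = a then c else 0).sum = if a ∈ l then c else 0 := by
  induction l with
  | nil => simp
  | cons b l ih =>
    rw [List.nodup_cons] at hl
    by_cases hba : b = a
    · subst hba
      have h0 : (l.map fun s => if s = b then c else 0).sum = 0 := by
        rw [ih hl.2]; simp [hl.1]
      simp [h0]
    · simp only [List.map_cons, List.sum_cons, if_neg hba, ih hl.2, List.mem_cons, zero_add]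
      by_cases hal : a ∈ l
      · simp [hal]
      · simp only [hal, if_neg (fun h : a = b => hba h.symm), or_false]
        simp [fun h : a = b => hba h.symm]

/-- The coefficient vector of the Laplacian at `z`. -/
noncomputable def cf (z : Fin 4 → ℤ) : (Fin 4 → ℤ) →₀ ℝ :=
  Finsupp.single z 24 - (sUnits.map fun s => Finsupp.single (z + s) (1 : ℝ)).sum

lemma cf_apply (z x : Fin 4 → ℤ) :
    cf z x = (if z = x then (24 : ℝ) else 0) - (if x - z ∈ sUnits then 1 else 0) := by
  rw [cf, Finsupp.sub_apply, Finsupp.single_apply]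
  congr 1
  rw [← Finsupp.applyAddHom_apply, map_list_sum, List.map_map]
  have : ((Finsupp.applyAddHom (M := ℝ) x) ∘ fun s => Finsupp.single (z + s) (1 : ℝ)) =
      fun s => if s = x - z then (1 : ℝ) else 0 := by
    funext s
    simp only [Function.comp_apply, Finsupp.applyAddHom_apply, Finsupp.single_apply]
    congr 1
    rw [eq_iff_iff]
    constructor
    · intro h; rw [← h]; abel
    · intro h; rw [h]; abel
  rw [this, sum_map_ite _ sUnits_nodup]

lemma cf_self (z : Fin 4 → ℤ) : cf z z = 24 := by
  rw [cf_apply]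
  simp [sub_self, sUnits_ne_zero]

lemma cf_neg_one (z : Fin 4 → ℤ) {s : Fin 4 → ℤ} (hs : s ∈ sUnits) : cf z (z + s) = -1 := by
  rw [cf_apply]
  have h1 : z ≠ z + s := by
    intro h
    have : s = 0 := by
      have := congrArg (fun w => w - z) h; simpa using this.symm
    exact sUnits_ne_zero (this ▸ hs)
  have h2 : z + s - z = s := by abel
  simp [h1, h2, hs]

lemma cf_nonpos (z x : Fin 4 → ℤ) (h : z ≠ x) : cf z x ≤ 0 := by
  rw [cf_apply, if_neg h]
  split <;> norm_num

lemma cf_ge (z x : Fin 4 → ℤ) : (-1 : ℝ) ≤ cf z x := by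
  rw [cf_apply]
  split <;> split <;> norm_num

lemma cf_le (z x : Fin 4 → ℤ) : cf z x ≤ (if z = x then (24 : ℝ) else 0) := by
  rw [cf_apply]
  split <;> split <;> norm_num

/-- The pairing of the coefficient vector at `z` with an arbitrary function. -/
noncomputable def pr (z : Fin 4 → ℤ) (g : (Fin 4 → ℤ) → ℝ) : ℝ :=
  24 * g z - (sUnits.map fun s => g (z + s)).sum

lemma pr_lap (ξ : (Fin 4 → ℤ) → ℝ) (z : Fin 4 → ℤ) : pr z ξ = d4Lap ξ z := by
  rw [pr, d4Lap]
  congr 1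
  rw [sUnits, List.map_append, List.sum_append, List.map_map, list_sum_map_add]
  congr 1

lemma sum_cf_mul (z : Fin 4 → ℤ) (g : (Fin 4 → ℤ) → ℝ) (S : Finset (Fin 4 → ℤ))
    (hS : (cf z).support ⊆ S) :
    ∑ x ∈ S, cf z x * g x = pr z g := by
  have h1 : ∑ x ∈ S, cf z x * g x = ∑ x ∈ (cf z).support, cf z x * g x := by
    refine (Finset.sum_subset hS ?_).symm
    intro x _ hx
    rw [Finsupp.notMem_support_iff.mp hx, zero_mul]
  have h2 : ∑ x ∈ (cf z).support, cf z x * g x =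
      Finsupp.linearCombination ℝ g (cf z) := by
    rw [Finsupp.linearCombination_apply, Finsupp.sum]
    simp [smul_eq_mul]
  rw [h1, h2, cf, map_sub, Finsupp.linearCombination_single, map_list_sum, List.map_map, pr]
  congr 1
  apply congrArg
  apply List.map_congr_left
  intro s _
  simp [Function.comp, Finsupp.linearCombination_single]

lemma pr_self (z : Fin 4 → ℤ) : pr z (cf z) = 600 := by
  rw [pr, cf_self]
  have : (sUnits.map fun s => cf z (z + s)) = sUnits.map fun _ => (-1 : ℝ) :=
    List.map_congr_left fun s hs => cf_neg_one z hs
  rw [this, sum_map_const, sUnits_length]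
  norm_num

lemma pr_cross (z z' : Fin 4 → ℤ) (h : z ≠ z') : |pr z (cf z')| ≤ 48 := by
  have hgz1 : (-1 : ℝ) ≤ cf z' z := cf_ge z' z
  have hgz2 : cf z' z ≤ 0 := cf_nonpos z' z (Ne.symm h)
  have hub : (sUnits.map fun s => cf z' (z + s)).sum ≤ 24 := by
    have step : (sUnits.map fun s => cf z' (z + s)).sum ≤
        (sUnits.map fun s => if s = z' - z then (24 : ℝ) else 0).sum := by
      apply List.sum_le_sum
      intro s _
      by_cases hsz : s = z' - z
      · rw [if_pos hsz]
        have : z + s = z' := by rw [hsz]; abel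
        rw [this, cf_self]
      · rw [if_neg hsz]
        apply cf_nonpos
        intro hzz
        exact hsz (by rw [hzz]; abel)
    refine step.trans ?_
    rw [sum_map_ite _ sUnits_nodup]
    split <;> norm_num
  have hlb : (-24 : ℝ) ≤ (sUnits.map fun s => cf z' (z + s)).sum := by
    have step : (sUnits.map fun _ => (-1 : ℝ)).sum ≤
        (sUnits.map fun s => cf z' (z + s)).sum := by
      apply List.sum_le_sum
      intro s _
      exact cf_ge z' (z + s)
    rw [sum_map_const, sUnits_length] at step
    norm_num at step
    linarith
  rw [pr, abs_le]
  constructor <;> linarith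

/-- If `ξ : ℤ⁴ → ℝ` is square-summable with `|ξ_x| ≤ 1/2`, its D4 Laplacian is integer
valued, and the Laplacian is nonzero at three distinct vertices, then
`Σₓ ξ_x² ≥ 3/742 > 0.004043`. -/
theorem d4_three_point_support_two_norm (ξ : (Fin 4 → ℤ) → ℝ)
    (hsum : Summable (fun x => ξ x ^ 2)) (hbdd : ∀ x, |ξ x| ≤ 1 / 2)
    (hint : ∀ x, ∃ n : ℤ, d4Lap ξ x = n)
    (z₁ z₂ z₃ : Fin 4 → ℤ) (h12 : z₁ ≠ z₂) (h13 : z₁ ≠ z₃) (h23 : z₂ ≠ z₃)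
    (h₁ : d4Lap ξ z₁ ≠ 0) (h₂ : d4Lap ξ z₂ ≠ 0) (h₃ : d4Lap ξ z₃ ≠ 0) :
    3 / 742 ≤ ∑' x, ξ x ^ 2 := by
  classical
  -- signs
  set ε₁ : ℝ := if 0 ≤ d4Lap ξ z₁ then 1 else -1 with hε₁def
  set ε₂ : ℝ := if 0 ≤ d4Lap ξ z₂ then 1 else -1 with hε₂def
  set ε₃ : ℝ := if 0 ≤ d4Lap ξ z₃ then 1 else -1 with hε₃def
  have habs : ∀ z, d4Lap ξ z ≠ 0 → (1 : ℝ) ≤ |d4Lap ξ z| := by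
    intro z hz
    obtain ⟨n, hn⟩ := hint z
    have hn0 : n ≠ 0 := by rintro rfl; simp at hn; exact hz hn
    rw [hn, ← Int.cast_abs]
    exact_mod_cast Int.one_le_abs hn0
  have hsgn : ∀ z, d4Lap ξ z ≠ 0 →
      (1 : ℝ) ≤ (if 0 ≤ d4Lap ξ z then (1:ℝ) else -1) * d4Lap ξ z := by
    intro z hz
    have := habs z hz
    by_cases h : 0 ≤ d4Lap ξ z
    · rw [if_pos h, one_mul]; rwa [abs_of_nonneg h] at this
    · rw [if_neg h, neg_one_mul]
      rw [abs_of_neg (lt_of_not_ge h)] at this; linarith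
  have hk₁ : (1 : ℝ) ≤ ε₁ * d4Lap ξ z₁ := hsgn z₁ h₁
  have hk₂ : (1 : ℝ) ≤ ε₂ * d4Lap ξ z₂ := hsgn z₂ h₂
  have hk₃ : (1 : ℝ) ≤ ε₃ * d4Lap ξ z₃ := hsgn z₃ h₃
  have hε₁sq : ε₁ * ε₁ = 1 := by rw [hε₁def]; split <;> norm_num
  have hε₂sq : ε₂ * ε₂ = 1 := by rw [hε₂def]; split <;> norm_num
  have hε₃sq : ε₃ * ε₃ = 1 := by rw [hε₃def]; split <;> norm_num
  have hεabs : ∀ z, |(if 0 ≤ d4Lap ξ z then (1:ℝ) else -1)| = 1 := by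
    intro z; split <;> norm_num
  -- the big finset
  set S : Finset (Fin 4 → ℤ) :=
    (cf z₁).support ∪ (cf z₂).support ∪ (cf z₃).support with hSdef
  have hS₁ : (cf z₁).support ⊆ S := (Finset.subset_union_left).trans Finset.subset_union_left
  have hS₂ : (cf z₂).support ⊆ S := (Finset.subset_union_right).trans Finset.subset_union_left
  have hS₃ : (cf z₃).support ⊆ S := Finset.subset_union_right
  -- the combined coefficient function
  set b : (Fin 4 → ℤ) → ℝ := fun x => ε₁ * cf z₁ x + ε₂ * cf z₂ x + ε₃ * cf z₃ x with hbdef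
  -- lower bound on the pairing
  have hpair : (3 : ℝ) ≤ ∑ x ∈ S, b x * ξ x := by
    have hexp : ∑ x ∈ S, b x * ξ x =
        ε₁ * ∑ x ∈ S, cf z₁ x * ξ x + ε₂ * ∑ x ∈ S, cf z₂ x * ξ x
          + ε₃ * ∑ x ∈ S, cf z₃ x * ξ x := by
      rw [Finset.mul_sum, Finset.mul_sum, Finset.mul_sum, ← Finset.sum_add_distrib,
        ← Finset.sum_add_distrib]
      apply Finset.sum_congr rfl
      intro x _
      rw [hbdef]; ring
    rw [hexp, sum_cf_mul z₁ ξ S hS₁, sum_cf_mul z₂ ξ S hS₂, sum_cf_mul z₃ ξ S hS₃,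
      pr_lap, pr_lap, pr_lap]
    linarith
  -- upper bound on the norm of b
  have hQ : ∑ x ∈ S, b x ^ 2 ≤ 2088 := by
    have hexp : ∑ x ∈ S, b x ^ 2 =
        (ε₁ * ε₁) * ∑ x ∈ S, cf z₁ x * cf z₁ x
        + (ε₂ * ε₂) * ∑ x ∈ S, cf z₂ x * cf z₂ x
        + (ε₃ * ε₃) * ∑ x ∈ S, cf z₃ x * cf z₃ x
        + 2 * (ε₁ * ε₂) * ∑ x ∈ S, cf z₁ x * cf z₂ x
        + 2 * (ε₁ * ε₃) * ∑ x ∈ S, cf z₁ x * cf z₃ x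
        + 2 * (ε₂ * ε₃) * ∑ x ∈ S, cf z₂ x * cf z₃ x := by
      simp only [Finset.mul_sum, ← Finset.sum_add_distrib]
      apply Finset.sum_congr rfl
      intro x _
      rw [hbdef]; ring
    have hself₁ : ∑ x ∈ S, cf z₁ x * cf z₁ x = 600 := by
      rw [sum_cf_mul z₁ (cf z₁) S hS₁, pr_self]
    have hself₂ : ∑ x ∈ S, cf z₂ x * cf z₂ x = 600 := by
      rw [sum_cf_mul z₂ (cf z₂) S hS₂, pr_self]
    have hself₃ : ∑ x ∈ S, cf z₃ x * cf z₃ x = 600 := by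
      rw [sum_cf_mul z₃ (cf z₃) S hS₃, pr_self]
    have hcross : ∀ (za zb : Fin 4 → ℤ), za ≠ zb → (cf za).support ⊆ S →
        ∀ ε ε' : ℝ, |ε| = 1 → |ε'| = 1 →
        2 * (ε * ε') * ∑ x ∈ S, cf za x * cf zb x ≤ 96 := by
      intro za zb hne hsub ε ε' hε hε'
      rw [sum_cf_mul za (cf zb) S hsub]
      have h48 := pr_cross za zb hne
      have habs96 : |2 * (ε * ε') * pr za (cf zb)| ≤ 96 := by
        rw [abs_mul, abs_mul, abs_mul, hε, hε', abs_two]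
        norm_num
        linarith
      exact (le_abs_self _).trans habs96
    have hc12 := hcross z₁ z₂ h12 hS₁ ε₁ ε₂ (hεabs z₁) (hεabs z₂)
    have hc13 := hcross z₁ z₃ h13 hS₁ ε₁ ε₃ (hεabs z₁) (hεabs z₃)
    have hc23 := hcross z₂ z₃ h23 hS₂ ε₂ ε₃ (hεabs z₂) (hεabs z₃)
    rw [hexp, hself₁, hself₂, hself₃, hε₁sq, hε₂sq, hε₃sq]
    linarith
  -- Cauchy–Schwarz
  have hcs : (∑ x ∈ S, b x * ξ x) ^ 2 ≤ (∑ x ∈ S, b x ^ 2) * ∑ x ∈ S, ξ x ^ 2 :=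
    Finset.sum_mul_sq_le_sq_mul_sq S b ξ
  have hts : ∑ x ∈ S, ξ x ^ 2 ≤ ∑' x, ξ x ^ 2 :=
    Summable.sum_le_tsum S (fun _ _ => sq_nonneg _) hsum
  have hs0 : (0 : ℝ) ≤ ∑ x ∈ S, ξ x ^ 2 := Finset.sum_nonneg fun _ _ => sq_nonneg _
  have h9 : (9 : ℝ) ≤ 2088 * ∑' x, ξ x ^ 2 := by
    have h1 : (9 : ℝ) ≤ (∑ x ∈ S, b x * ξ x) ^ 2 := by nlinarith
    have h2 : (∑ x ∈ S, b x ^ 2) * ∑ x ∈ S, ξ x ^ 2 ≤ 2088 * ∑' x, ξ x ^ 2 := by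
      have hQ0 : (0 : ℝ) ≤ ∑ x ∈ S, b x ^ 2 := Finset.sum_nonneg fun _ _ => sq_nonneg _
      nlinarith
    linarith
  linarith
end

section
/- Let d ≥ 1 and let U₁, …, U_d be independent random variables uniformly distributed on [0,1]. Set X_i = cos(2πU_i) and X = (1/d)(X₁ + ⋯ + X_d). Then for every 0 ≤ δ ≤ 1, Prob(X > 1−δ) ≤ min( exp(−d(1−δ)²/2), (πeδ/4)^{d/2} ). -/
/-! Chernoff's bound reduces both estimates to the moment generating function
`m(t) = ∫₀¹ exp (t cos 2πx) dx` of a single summand. Since `cos 2πU` is centred and takes values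
in `[-1, 1]`, Hoeffding's lemma gives `m(t) ≤ exp (t² / 2)`; at `t = 1 - δ` this is the first
bound. For the second, `cos 2πx ≤ 1 - 8x²` for `|x| ≤ 1/2` dominates `exp (s cos 2πx)` on `[0, 1]`
by `eˢ` times two Gaussians centred at `0` and `1`, so `m(s) ≤ eˢ √(π / (8s))`; at `s = 1/(2δ)`
this is `(π e δ / 4)^{d/2}`. -/

open Real MeasureTheory ProbabilityTheory Set

instance isProbabilityMeasure_restrict_Icc_zero_one :
    IsProbabilityMeasure (volume.restrict (Icc (0 : ℝ) 1)) :=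
  ⟨by simp⟩

lemma mgf_pi_sum_eq_pow {α ι : Type*} [MeasurableSpace α] [Fintype ι] (ν : Measure α)
    [SigmaFinite ν] (f : α → ℝ) (t : ℝ) :
    mgf (fun ω : ι → α => ∑ i, f (ω i)) (Measure.pi fun _ => ν) t
      = mgf f ν t ^ Fintype.card ι := by
  simp only [mgf, Finset.mul_sum, exp_sum]
  exact integral_fintype_prod_eq_pow (fun x => exp (t * f x))

lemma measure_pi_lt_sum_le_exp_mul_mgf_pow {α ι : Type*} [MeasurableSpace α] [Fintype ι]
    (ν : Measure α) [IsFiniteMeasure ν] (f : α → ℝ) {t : ℝ} (ht : 0 ≤ t)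
    (hf : Integrable (fun x => exp (t * f x)) ν) (c : ℝ) :
    Measure.pi (fun _ : ι => ν) {ω | c < ∑ i, f (ω i)}
      ≤ ENNReal.ofReal (exp (-t * c) * mgf f ν t ^ Fintype.card ι) := by
  have hsum :
      Integrable (fun ω : ι → α => exp (t * ∑ i, f (ω i))) (Measure.pi fun _ => ν) := by
    simpa only [Finset.mul_sum, exp_sum] using Integrable.fintype_prod fun (_ : ι) => hf
  calc Measure.pi (fun _ : ι => ν) {ω | c < ∑ i, f (ω i)}
      ≤ Measure.pi (fun _ : ι => ν) {ω | c ≤ ∑ i, f (ω i)} :=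
        measure_mono (ofPred_subset_ofPred.2 fun _ => le_of_lt)
    _ = ENNReal.ofReal ((Measure.pi fun _ : ι => ν).real {ω | c ≤ ∑ i, f (ω i)}) :=
      (ofReal_measureReal (measure_ne_top _ _)).symm
    _ ≤ _ := by
      rw [← mgf_pi_sum_eq_pow]
      exact ENNReal.ofReal_le_ofReal (measure_ge_le_exp_mul_mgf c ht hsum)

lemma integral_cos_two_pi_mul_Icc : ∫ x in Icc (0 : ℝ) 1, cos (2 * π * x) = 0 := by
  rw [integral_Icc_eq_integral_Ioc, ← intervalIntegral.integral_of_le zero_le_one,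
    intervalIntegral.integral_comp_mul_left cos (by positivity)]
  simp

lemma mgf_cos_two_pi_mul_le_exp_sq (t : ℝ) :
    mgf (fun x => cos (2 * π * x)) (volume.restrict (Icc (0 : ℝ) 1)) t ≤ exp (t ^ 2 / 2) := by
  refine ((hasSubgaussianMGF_of_mem_Icc_of_integral_eq_zero (a := -1) (b := 1)
    (by fun_prop) (ae_of_all _ fun x => ⟨neg_one_le_cos _, cos_le_one _⟩)
    integral_cos_two_pi_mul_Icc).mgf_le t).trans_eq ?_
  norm_num

lemma cos_two_pi_mul_le_one_sub {y : ℝ} (hy : |y| ≤ 1 / 2) :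
    cos (2 * π * y) ≤ 1 - 8 * y ^ 2 := by
  have h := cos_le_one_sub_mul_cos_sq (x := 2 * π * y) (by
    rw [abs_mul, abs_of_pos (by positivity : 0 < 2 * π)]; nlinarith [pi_pos])
  convert h using 2
  field_simp
  ring

lemma exp_mul_cos_two_pi_mul_le {s x : ℝ} (hs : 0 ≤ s) (hx : x ∈ Icc (0 : ℝ) 1) :
    exp (s * cos (2 * π * x))
      ≤ exp s * (exp (-(8 * s) * x ^ 2) + exp (-(8 * s) * (x - 1) ^ 2)) := by
  have hgauss : ∀ y, |y| ≤ 1 / 2 → cos (2 * π * y) = cos (2 * π * x) →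
      exp (s * cos (2 * π * x)) ≤ exp s * exp (-(8 * s) * y ^ 2) := fun y hy hxy => by
    rw [← exp_add, ← hxy]
    gcongr
    nlinarith [cos_two_pi_mul_le_one_sub hy]
  rcases le_total x (1 / 2) with hx2 | hx2
  · have := hgauss x (abs_le.2 ⟨by linarith [hx.1], hx2⟩) rfl
    nlinarith [exp_pos s, exp_pos (-(8 * s) * (x - 1) ^ 2)]
  · have hcos : cos (2 * π * (x - 1)) = cos (2 * π * x) := by
      rw [mul_sub, mul_one, cos_sub_two_pi]
    have := hgauss (x - 1) (abs_le.2 ⟨by linarith, by linarith [hx.2]⟩) hcos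
    nlinarith [exp_pos s, exp_pos (-(8 * s) * x ^ 2)]

lemma integral_gaussian_add_shift_le {b : ℝ} (hb : 0 < b) :
    ∫ x in (0 : ℝ)..1, (exp (-b * x ^ 2) + exp (-b * (x - 1) ^ 2)) ≤ √(π / b) := by
  have hg : Continuous fun x : ℝ => exp (-b * x ^ 2) := by fun_prop
  rw [intervalIntegral.integral_add (hg.intervalIntegrable _ _)
      (Continuous.intervalIntegrable (by fun_prop) _ _),
    intervalIntegral.integral_comp_sub_right (fun x => exp (-b * x ^ 2)), add_comm,
    zero_sub, sub_self, intervalIntegral.integral_add_adjacent_intervals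
      (hg.intervalIntegrable _ _) (hg.intervalIntegrable _ _),
    intervalIntegral.integral_of_le (by norm_num), ← integral_gaussian]
  exact setIntegral_le_integral (integrable_exp_neg_mul_sq hb)
    (ae_of_all _ fun _ => (exp_pos _).le)

lemma mgf_cos_two_pi_mul_le_exp_mul_sqrt {s : ℝ} (hs : 0 < s) :
    mgf (fun x => cos (2 * π * x)) (volume.restrict (Icc (0 : ℝ) 1)) s
      ≤ exp s * √(π / (8 * s)) := by
  rw [mgf, integral_Icc_eq_integral_Ioc, ← intervalIntegral.integral_of_le zero_le_one]
  calc ∫ x in (0 : ℝ)..1, exp (s * cos (2 * π * x))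
      ≤ ∫ x in (0 : ℝ)..1,
          exp s * (exp (-(8 * s) * x ^ 2) + exp (-(8 * s) * (x - 1) ^ 2)) :=
        intervalIntegral.integral_mono_on zero_le_one
          (Continuous.intervalIntegrable (by fun_prop) _ _)
          (Continuous.intervalIntegrable (by fun_prop) _ _)
          fun _ hx => exp_mul_cos_two_pi_mul_le hs.le hx
    _ ≤ exp s * √(π / (8 * s)) := by
      rw [intervalIntegral.integral_const_mul]
      exact mul_le_mul_of_nonneg_left (integral_gaussian_add_shift_le (by positivity))
        (exp_pos s).le

lemma measure_pi_lt_sum_cos_le_exp (d : ℕ) {a : ℝ} (ha : 0 ≤ a) :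
    (Measure.pi fun _ : Fin d => volume.restrict (Icc (0 : ℝ) 1))
        {ω | a * d < ∑ i, cos (2 * π * ω i)}
      ≤ ENNReal.ofReal (exp (-(d : ℝ) * a ^ 2 / 2)) := by
  have hint : Continuous fun x => exp (a * cos (2 * π * x)) := by fun_prop
  refine (measure_pi_lt_sum_le_exp_mul_mgf_pow _ _ ha hint.integrableOn_Icc _).trans
    (ENNReal.ofReal_le_ofReal ?_)
  rw [Fintype.card_fin]
  calc exp (-a * (a * d)) * mgf (fun x => cos (2 * π * x)) _ a ^ d
      ≤ exp (-a * (a * d)) * exp (a ^ 2 / 2) ^ d := by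
        gcongr
        · exact mgf_nonneg
        · exact mgf_cos_two_pi_mul_le_exp_sq a
    _ = exp (-(d : ℝ) * a ^ 2 / 2) := by
      rw [← exp_nat_mul, ← exp_add]
      ring_nf

lemma measure_pi_lt_sum_cos_le_rpow (d : ℕ) {δ : ℝ} (hδ : 0 < δ) :
    (Measure.pi fun _ : Fin d => volume.restrict (Icc (0 : ℝ) 1))
        {ω | (1 - δ) * d < ∑ i, cos (2 * π * ω i)}
      ≤ ENNReal.ofReal ((π * exp 1 * δ / 4) ^ ((d : ℝ) / 2)) := by
  set s := 1 / (2 * δ) with hs_def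
  have hs : 0 < s := by positivity
  have hint : Continuous fun x => exp (s * cos (2 * π * x)) := by fun_prop
  refine (measure_pi_lt_sum_le_exp_mul_mgf_pow _ _ hs.le hint.integrableOn_Icc _).trans
    (ENNReal.ofReal_le_ofReal ?_)
  rw [Fintype.card_fin, rpow_div_two_eq_sqrt _ (by positivity), rpow_natCast]
  have hπs : π / (8 * s) = π * δ / 4 := by
    rw [hs_def]; field_simp; ring
  calc exp (-s * ((1 - δ) * d)) * mgf (fun x => cos (2 * π * x)) _ s ^ d
      ≤ exp (-s * ((1 - δ) * d)) * (exp s * √(π / (8 * s))) ^ d := by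
        gcongr
        · exact mgf_nonneg
        · exact mgf_cos_two_pi_mul_le_exp_mul_sqrt hs
    _ = (exp (s * δ) * √(π * δ / 4)) ^ d := by
      rw [mul_pow, mul_pow, ← mul_assoc, ← exp_nat_mul, ← exp_nat_mul, ← exp_add, hπs]
      ring_nf
    _ = √(π * exp 1 * δ / 4) ^ d := by
      rw [show s * δ = 1 / 2 by rw [hs_def]; field_simp, exp_half,
        ← sqrt_mul (exp_pos 1).le]
      ring_nf

lemma measure_pi_lt_sum_cos_eq_zero (d : ℕ) {c : ℝ} (hc : d ≤ c) :
    (Measure.pi fun _ : Fin d => volume.restrict (Icc (0 : ℝ) 1))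
        {ω | c < ∑ i, cos (2 * π * ω i)} = 0 := by
  refine measure_mono_null (fun ω (hω : c < _) => ?_) measure_empty
  have hsum : ∑ i : Fin d, cos (2 * π * ω i) ≤ d :=
    (Finset.sum_le_sum fun i _ => cos_le_one _).trans_eq (by simp)
  exact (hc.trans_lt hω).not_ge hsum

theorem cosine_large_deviation_bound_general (d : ℕ) (δ : ℝ)
    (hδ1 : δ ≤ 1) :
    (Measure.pi fun _ : Fin d => volume.restrict (Set.Icc (0 : ℝ) 1))
        {ω : Fin d → ℝ | 1 - δ < (∑ i : Fin d, Real.cos (2 * π * ω i)) / d} ≤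
      ENNReal.ofReal
        (min (Real.exp (-(d : ℝ) * (1 - δ) ^ 2 / 2))
          ((π * Real.exp 1 * δ / 4) ^ ((d : ℝ) / 2))) := by
  have hsub : {ω : Fin d → ℝ | 1 - δ < (∑ i : Fin d, cos (2 * π * ω i)) / d}
      ⊆ {ω | (1 - δ) * d < ∑ i, cos (2 * π * ω i)} := fun ω hω => by
    rcases (Nat.cast_nonneg d : (0 : ℝ) ≤ d).eq_or_lt with hd0 | hd0
    · simp only [mem_ofPred_eq, ← hd0, div_zero] at hω
      linarith
    · exact (lt_div_iff₀ hd0).1 hω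
  refine (measure_mono hsub).trans ?_
  rcases le_or_gt δ 0 with hδ | hδ
  · rw [measure_pi_lt_sum_cos_eq_zero d (by nlinarith [(Nat.cast_nonneg d : (0 : ℝ) ≤ d)])]
    exact zero_le
  · rw [ENNReal.ofReal_min]
    exact le_min (measure_pi_lt_sum_cos_le_exp d (sub_nonneg.2 hδ1))
      (measure_pi_lt_sum_cos_le_rpow d hδ)

/-- Let `U₁, …, U_d` be i.i.d. uniform on `[0,1]`, `X_i = cos(2πU_i)` and
`X = (X₁ + ⋯ + X_d)/d`.  For `0 ≤ δ ≤ 1`,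
`Prob(X > 1 − δ) ≤ min(exp(−d(1−δ)²/2), (πeδ/4)^{d/2})`. -/
theorem cosine_large_deviation_bound (d : ℕ) (hd : 1 ≤ d) (δ : ℝ) (hδ0 : 0 ≤ δ)
    (hδ1 : δ ≤ 1) :
    (Measure.pi fun _ : Fin d => volume.restrict (Set.Icc (0 : ℝ) 1))
        {ω : Fin d → ℝ | 1 - δ < (∑ i : Fin d, Real.cos (2 * π * ω i)) / d} ≤
      ENNReal.ofReal
        (min (Real.exp (-(d : ℝ) * (1 - δ) ^ 2 / 2))
          ((π * Real.exp 1 * δ / 4) ^ ((d : ℝ) / 2))) :=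
  cosine_large_deviation_bound_general d δ hδ1
end
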